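/- arXiv:2209.04903 — 2 statements merged into one kernel-verified Lean document; each statement's English description precedes it below -/
import Mathlib

section
/- (Edmonds' matroid LP duality) Let M be a matroid on a finite ground set U with rank function r and nonnegative real element weights w. Then there exists a nonnegative function y on the subsets of U with Σ_{S : e ∈ S} y_S ≥ w(e) for every e ∈ U and Σ_{S ⊆ U} r(S)·y_S = worth(M), where worth(M) is the maximum of Σ_{e ∈ I} w(e) over independent sets I of M. Consequently the minimum of Σ_S r(S)·y_S over all such dual-feasible y equals worth(M). -/
open scoped Classical

noncomputable def matroidRank {α : Type*} (M : Matroid α) (S : Set α) : ℕ :=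
  sSup {n : ℕ | ∃ I ⊆ S, M.Indep I ∧ I.ncard = n}

/-- `worth(M)`: the maximum total weight of an independent set of `M`. -/
noncomputable def matroidWorth {α : Type*} [Fintype α] (M : Matroid α) (w : α → ℝ) : ℝ :=
  sSup {x : ℝ | ∃ I : Finset α, M.Indep (↑I : Set α) ∧ x = ∑ e ∈ I, w e}

section Aux

variable {α : Type*} [Fintype α] {M : Matroid α}

lemma rankSet_nonempty (S : Set α) :
    {n : ℕ | ∃ I ⊆ S, M.Indep I ∧ I.ncard = n}.Nonempty :=
  ⟨0, ∅, Set.empty_subset _, M.empty_indep, by simp⟩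

lemma rankSet_bdd (S : Set α) :
    BddAbove {n : ℕ | ∃ I ⊆ S, M.Indep I ∧ I.ncard = n} := by
  refine ⟨Fintype.card α, fun n hn => ?_⟩
  obtain ⟨I, -, -, rfl⟩ := hn
  calc I.ncard ≤ (Set.univ : Set α).ncard :=
        Set.ncard_le_ncard (Set.subset_univ I) Set.finite_univ
    _ = Fintype.card α := by simp [Set.ncard_univ]

lemma ncard_le_matroidRank {I S : Set α} (hIS : I ⊆ S) (hI : M.Indep I) :
    I.ncard ≤ matroidRank M S :=
  le_csSup (rankSet_bdd S) ⟨I, hIS, hI, rfl⟩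

lemma matroidRank_spec (S : Set α) :
    ∃ I ⊆ S, M.Indep I ∧ I.ncard = matroidRank M S :=
  Nat.sSup_mem (rankSet_nonempty S) (rankSet_bdd S)

lemma matroidRank_mono {S T : Set α} (hST : S ⊆ T) :
    matroidRank M S ≤ matroidRank M T := by
  obtain ⟨I, hIS, hI, hcard⟩ := matroidRank_spec (M := M) S
  rw [← hcard]
  exact ncard_le_matroidRank (hIS.trans hST) hI

lemma matroidRank_empty : matroidRank M (∅ : Set α) = 0 := by
  have h := matroidRank_spec (M := M) (∅ : Set α)
  obtain ⟨I, hIS, -, hcard⟩ := h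
  rw [← hcard, Set.subset_empty_iff.mp hIS]
  simp

lemma matroidRank_insert_le (x : α) (S : Set α) :
    matroidRank M (insert x S) ≤ matroidRank M S + 1 := by
  obtain ⟨I, hIS, hI, hcard⟩ := matroidRank_spec (M := M) (insert x S)
  rw [← hcard]
  have h1 : I \ {x} ⊆ S := by
    intro y hy
    rcases hIS hy.1 with h | h
    · exact absurd h hy.2
    · exact h
  have h2 : (I \ {x}).ncard ≤ matroidRank M S :=
    ncard_le_matroidRank h1 (hI.subset Set.diff_subset)
  have h3 : I.ncard ≤ (I \ {x}).ncard + 1 := by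
    calc I.ncard ≤ (insert x (I \ {x})).ncard :=
          Set.ncard_le_ncard (fun y hy => by
            by_cases hyx : y = x
            · exact Or.inl hyx
            · exact Or.inr ⟨hy, hyx⟩) (Set.toFinite _)
      _ ≤ (I \ {x}).ncard + 1 := Set.ncard_insert_le _ _
  omega

lemma worthSet_finite (w : α → ℝ) :
    {x : ℝ | ∃ I : Finset α, M.Indep (↑I : Set α) ∧ x = ∑ e ∈ I, w e}.Finite := by
  apply Set.Finite.subset (Set.finite_range (fun I : Finset α => ∑ e ∈ I, w e))
  rintro x ⟨I, -, rfl⟩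
  exact ⟨I, rfl⟩

lemma worthSet_nonempty (w : α → ℝ) :
    {x : ℝ | ∃ I : Finset α, M.Indep (↑I : Set α) ∧ x = ∑ e ∈ I, w e}.Nonempty :=
  ⟨0, ∅, by simpa using M.empty_indep, by simp⟩

lemma le_matroidWorth (w : α → ℝ) {I : Finset α} (hI : M.Indep (↑I : Set α)) :
    ∑ e ∈ I, w e ≤ matroidWorth M w :=
  le_csSup (worthSet_finite w).bddAbove ⟨I, hI, rfl⟩

lemma matroidWorth_mem (w : α → ℝ) :
    ∃ I : Finset α, M.Indep (↑I : Set α) ∧ matroidWorth M w = ∑ e ∈ I, w e :=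
  (worthSet_nonempty (M := M) w).csSup_mem (worthSet_finite w)

/-- Weak LP duality. -/
lemma weak_duality (w : α → ℝ) (y : Finset α → ℝ)
    (hy0 : ∀ S : Finset α, 0 ≤ y S)
    (hyfeas : ∀ e : α,
      w e ≤ ∑ S ∈ (Finset.univ : Finset (Finset α)).filter (fun S => e ∈ S), y S)
    {I : Finset α} (hI : M.Indep (↑I : Set α)) :
    ∑ e ∈ I, w e ≤ ∑ S : Finset α, (matroidRank M ↑S : ℝ) * y S := by
  calc ∑ e ∈ I, w e
      ≤ ∑ e ∈ I, ∑ S ∈ (Finset.univ : Finset (Finset α)).filter (fun S => e ∈ S), y S :=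
        Finset.sum_le_sum fun e _ => hyfeas e
    _ = ∑ e ∈ I, ∑ S : Finset α, (if e ∈ S then y S else 0) := by
        refine Finset.sum_congr rfl fun e _ => ?_
        rw [Finset.sum_filter]
    _ = ∑ S : Finset α, ∑ e ∈ I, (if e ∈ S then y S else 0) := Finset.sum_comm
    _ = ∑ S : Finset α, ((I.filter (fun e => e ∈ S)).card : ℝ) * y S := by
        refine Finset.sum_congr rfl fun S _ => ?_
        rw [← Finset.sum_filter, Finset.sum_const, nsmul_eq_mul]
    _ ≤ ∑ S : Finset α, (matroidRank M ↑S : ℝ) * y S := by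
        refine Finset.sum_le_sum fun S _ => ?_
        refine mul_le_mul_of_nonneg_right ?_ (hy0 S)
        have h1 : M.Indep (↑(I.filter (fun e => e ∈ S)) : Set α) := by
          apply hI.subset
          intro x hx
          simp only [Finset.coe_filter, Set.mem_setOf_eq] at hx
          exact hx.1
        have h2 : (↑(I.filter (fun e => e ∈ S)) : Set α) ⊆ ↑S := by
          intro x hx
          simp only [Finset.coe_filter, Set.mem_setOf_eq] at hx
          exact hx.2
        have := ncard_le_matroidRank h2 h1
        rw [Set.ncard_coe_finset] at this
        exact_mod_cast this

end Aux

theorem edmonds_matroid_lp_duality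
    {α : Type*} [Fintype α] (M : Matroid α) (hE : M.E = Set.univ)
    (w : α → ℝ) (hw : ∀ e, 0 ≤ w e) :
    -- the minimum of `Σ_S r(S) · y_S` over dual-feasible nonnegative `y` is attained
    -- and equals `worth(M)`; in particular some dual-feasible `y` achieves `worth(M)`
    IsLeast
      {s : ℝ | ∃ y : Finset α → ℝ,
        (∀ S : Finset α, 0 ≤ y S) ∧
        (∀ e : α,
          w e ≤ ∑ S ∈ (Finset.univ : Finset (Finset α)).filter (fun S => e ∈ S), y S) ∧
        s = ∑ S : Finset α, (matroidRank M ↑S : ℝ) * y S}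
      (matroidWorth M w) := by
  set n := Fintype.card α with hn
  -- a sorted (weight-decreasing) enumeration of α
  let eq : α ≃ Fin n := Fintype.equivFin α
  let σ : Equiv.Perm (Fin n) := Tuple.sort (fun i => -w (eq.symm i))
  let a : Fin n → α := fun i => eq.symm (σ i)
  have ha_inj : Function.Injective a :=
    eq.symm.injective.comp σ.injective
  have ha_surj : Function.Surjective a :=
    eq.symm.surjective.comp σ.surjective
  have ha_anti : ∀ i j : Fin n, i ≤ j → w (a j) ≤ w (a i) := by
    intro i j hij
    have := Tuple.monotone_sort (fun i => -w (eq.symm i)) hij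
    simp only [Function.comp_apply] at this
    have : -w (a i) ≤ -w (a j) := this
    linarith
  -- extended weight sequence
  set v : ℕ → ℝ := fun i => if h : i < n then w (a ⟨i, h⟩) else 0 with hv
  have hv_nonneg : ∀ i, 0 ≤ v i := by
    intro i; simp only [hv]; split
    · exact hw _
    · exact le_refl 0
  have hv_anti : ∀ i j : ℕ, i ≤ j → v j ≤ v i := by
    intro i j hij
    by_cases hj : j < n
    · have hi : i < n := by omega
      simp only [hv, dif_pos hi, dif_pos hj]
      exact ha_anti ⟨i, hi⟩ ⟨j, hj⟩ (by exact hij)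
    · simp only [hv, dif_neg hj]
      exact hv_nonneg i
  have hvn : v n = 0 := by simp [hv]
  have hva : ∀ (j : Fin n), v (j : ℕ) = w (a j) := by
    intro j; simp [hv, j.isLt]
  -- prefix sets
  set P : ℕ → Finset α := fun k =>
    (Finset.univ : Finset α).filter (fun x => ∃ j : Fin n, (j : ℕ) < k ∧ a j = x) with hP
  have hP_mem : ∀ k x, x ∈ P k ↔ ∃ j : Fin n, (j : ℕ) < k ∧ a j = x := by
    intro k x; simp [hP]
  have hPa : ∀ (k : ℕ) (j : Fin n), a j ∈ P k ↔ (j : ℕ) < k := by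
    intro k j
    rw [hP_mem]
    constructor
    · rintro ⟨j', hj', hjj⟩
      rwa [ha_inj hjj] at hj'
    · intro h; exact ⟨j, h, rfl⟩
  have hP0 : P 0 = ∅ := by
    ext x; simp [hP_mem]
  have hP_succ : ∀ (k : ℕ) (hk : k < n), P (k + 1) = insert (a ⟨k, hk⟩) (P k) := by
    intro k hk
    ext x
    simp only [Finset.mem_insert, hP_mem]
    constructor
    · rintro ⟨j, hj, rfl⟩
      rcases Nat.lt_succ_iff_lt_or_eq.mp hj with h | h
      · exact Or.inr ⟨j, h, rfl⟩
      · exact Or.inl (by congr 1; exact Fin.ext h)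
    · rintro (rfl | ⟨j, hj, rfl⟩)
      · exact ⟨⟨k, hk⟩, by simp, rfl⟩
      · exact ⟨j, by omega, rfl⟩
  have hP_subset : ∀ k, (↑(P k) : Set α) ⊆ ↑(P (k + 1)) := by
    intro k x hx
    simp only [Finset.coe_filter, Set.mem_setOf_eq, hP] at hx ⊢
    obtain ⟨hx1, j, hj, rfl⟩ := hx
    exact ⟨hx1, j, by omega, rfl⟩
  -- ranks
  set R : ℕ → ℕ := fun k => matroidRank M ↑(P k) with hR
  set ρ : ℕ → ℝ := fun k => (R k : ℝ) with hρ
  have hR0 : R 0 = 0 := by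
    simp only [hR, hP0, Finset.coe_empty]
    exact matroidRank_empty
  have hR_mono : ∀ k, R k ≤ R (k + 1) := fun k => matroidRank_mono (hP_subset k)
  have hR_step : ∀ (k : ℕ) (hk : k < n), R (k + 1) ≤ R k + 1 := by
    intro k hk
    have := matroidRank_insert_le (M := M) (a ⟨k, hk⟩) (↑(P k))
    simpa only [hR, hP_succ k hk, Finset.coe_insert] using this
  -- the dual solution
  set y : Finset α → ℝ := fun S =>
    ∑ i ∈ Finset.range n, (if P (i + 1) = S then v i - v (i + 1) else 0) with hy
  have hy0 : ∀ S, 0 ≤ y S := by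
    intro S
    apply Finset.sum_nonneg
    intro i _
    split
    · linarith [hv_anti i (i + 1) (by omega)]
    · exact le_refl 0
  -- feasibility
  have hyfeas : ∀ e : α,
      w e ≤ ∑ S ∈ (Finset.univ : Finset (Finset α)).filter (fun S => e ∈ S), y S := by
    intro e
    obtain ⟨j, rfl⟩ := ha_surj e
    have hsum : ∑ S ∈ (Finset.univ : Finset (Finset α)).filter (fun S => a j ∈ S), y S
        = ∑ i ∈ Finset.range n, (if a j ∈ P (i + 1) then v i - v (i + 1) else 0) := by
      simp only [hy]
      rw [Finset.sum_comm]
      refine Finset.sum_congr rfl fun i _ => ?_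
      rw [Finset.sum_ite_eq (Finset.univ.filter (fun S => a j ∈ S)) (P (i+1)) (fun _ => v i - v (i+1))]
      simp
    rw [hsum]
    have hterm : ∀ i ∈ Finset.range n,
        (if a j ∈ P (i + 1) then v i - v (i + 1) else 0)
          = v (max i (j : ℕ)) - v (max (i + 1) (j : ℕ)) := by
      intro i _
      by_cases hji : (j : ℕ) ≤ i
      · rw [if_pos ((hPa (i + 1) j).mpr (by omega)), max_eq_left hji,
          max_eq_left (by omega)]
      · rw [if_neg (fun hmem => hji (by have := (hPa (i + 1) j).mp hmem; omega)),
          max_eq_right (le_of_not_ge hji), max_eq_right (by omega), sub_self]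
    rw [Finset.sum_congr rfl hterm,
      Finset.sum_range_sub' (fun i => v (max i (j : ℕ))) n]
    have h1 : max 0 (j : ℕ) = (j : ℕ) := by omega
    have h2 : max n (j : ℕ) = n := by have := j.isLt; omega
    rw [h1, h2, hvn, sub_zero, hva]
  -- objective value
  have hobj : ∑ S : Finset α, (matroidRank M ↑S : ℝ) * y S
      = ∑ i ∈ Finset.range n, ρ (i + 1) * (v i - v (i + 1)) := by
    simp only [hy, Finset.mul_sum, mul_ite, mul_zero]
    rw [Finset.sum_comm]
    refine Finset.sum_congr rfl fun i _ => ?_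
    rw [Finset.sum_ite_eq (Finset.univ : Finset (Finset α)) (P (i+1))
      (fun S => (matroidRank M ↑S : ℝ) * (v i - v (i+1)))]
    simp [hρ, hR]
  -- Abel summation
  have habel : ∑ i ∈ Finset.range n, ρ (i + 1) * (v i - v (i + 1))
      = ∑ i ∈ Finset.range n, (ρ (i + 1) - ρ i) * v i := by
    have key : ∑ i ∈ Finset.range n,
        (ρ (i + 1) * (v i - v (i + 1)) - (ρ (i + 1) - ρ i) * v i)
        = ∑ i ∈ Finset.range n, (ρ i * v i - ρ (i + 1) * v (i + 1)) := by
      refine Finset.sum_congr rfl fun i _ => ?_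
      ring
    rw [Finset.sum_range_sub' (fun i => ρ i * v i) n] at key
    have hρ0 : ρ 0 = 0 := by
      show ((R 0 : ℝ)) = 0
      rw [hR0]; simp
    rw [hρ0, hvn, zero_mul, mul_zero, sub_zero] at key
    have := Finset.sum_sub_distrib (s := Finset.range n)
      (f := fun i => ρ (i + 1) * (v i - v (i + 1))) (g := fun i => (ρ (i + 1) - ρ i) * v i)
    linarith [key, this]
  -- greedy: existence of independent set matching the objective
  have hkey : ∀ k ≤ n, ∃ G : Finset α, M.Indep (↑G : Set α) ∧ (↑G : Set α) ⊆ ↑(P k) ∧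
      G.card = R k ∧ ∑ x ∈ G, w x = ∑ i ∈ Finset.range k, (ρ (i + 1) - ρ i) * v i := by
    intro k
    induction k with
    | zero =>
      intro _
      refine ⟨∅, by simpa using M.empty_indep, by simp, ?_, by simp⟩
      simp [hR0]
    | succ k ih =>
      intro hk
      obtain ⟨G, hGind, hGsub, hGcard, hGsum⟩ := ih (by omega)
      have hkn : k < n := by omega
      by_cases hrk : R (k + 1) = R k
      · refine ⟨G, hGind, hGsub.trans (hP_subset k), by rw [hGcard, hrk], ?_⟩
        rw [Finset.sum_range_succ, hGsum]
        have : ρ (k + 1) - ρ k = 0 := by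
          show ((R (k + 1) : ℝ)) - ((R k : ℝ)) = 0
          rw [hrk, sub_self]
        rw [this, zero_mul, add_zero]
      · have hrk1 : R (k + 1) = R k + 1 := by
          have := hR_mono k; have := hR_step k hkn; omega
        obtain ⟨J, hJsub, hJind, hJcard⟩ := matroidRank_spec (M := M) (↑(P (k + 1)) : Set α)
        have hlt : (↑G : Set α).encard < J.encard := by
          rw [← (Set.toFinite J).cast_ncard_eq, ← (Set.toFinite (↑G : Set α)).cast_ncard_eq]
          rw [Set.ncard_coe_finset, hGcard, hJcard]
          exact_mod_cast (by omega : R k < R (k + 1))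
        obtain ⟨x, hxJ, hxind⟩ := hGind.augment hJind hlt
        have hxnotG : x ∉ (↑G : Set α) := hxJ.2
        have hxP : x ∉ (↑(P k) : Set α) := by
          intro hxPk
          have hsub : insert x (↑G : Set α) ⊆ ↑(P k) := by
            intro z hz
            rcases hz with rfl | hz
            · exact hxPk
            · exact hGsub hz
          have := ncard_le_matroidRank hsub hxind
          rw [Set.ncard_insert_of_notMem hxnotG (Set.toFinite _),
            Set.ncard_coe_finset, hGcard] at this
          have h' : R k + 1 ≤ R k := this
          omega
        have hxa : x = a ⟨k, hkn⟩ := by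
          have hxPk1 : x ∈ (↑(P (k + 1)) : Set α) := hJsub hxJ.1
          rw [hP_succ k hkn] at hxPk1
          simp only [Finset.coe_insert, Set.mem_insert_iff] at hxPk1
          rcases hxPk1 with h | h
          · exact h
          · exact absurd h hxP
        have hanotG : a ⟨k, hkn⟩ ∉ G := by
          rw [← hxa]; exact fun h => hxnotG (Finset.mem_coe.mpr h)
        refine ⟨insert (a ⟨k, hkn⟩) G, ?_, ?_, ?_, ?_⟩
        · rw [Finset.coe_insert, ← hxa]; exact hxind
        · rw [Finset.coe_insert, hP_succ k hkn, Finset.coe_insert]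
          exact Set.insert_subset_insert hGsub
        · rw [Finset.card_insert_of_notMem hanotG, hGcard, hrk1]
        · rw [Finset.sum_insert hanotG, Finset.sum_range_succ, hGsum]
          have h1 : ρ (k + 1) - ρ k = 1 := by
            show ((R (k + 1) : ℝ)) - ((R k : ℝ)) = 1
            rw [hrk1]; push_cast; ring
          rw [h1, one_mul]
          have : v k = w (a ⟨k, hkn⟩) := hva ⟨k, hkn⟩
          rw [this, add_comm]
  obtain ⟨G, hGind, -, -, hGsum⟩ := hkey n le_rfl
  obtain ⟨I₀, hI₀ind, hI₀⟩ := matroidWorth_mem (M := M) w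
  have hobj_eq : ∑ S : Finset α, (matroidRank M ↑S : ℝ) * y S = matroidWorth M w := by
    have hle : ∑ S : Finset α, (matroidRank M ↑S : ℝ) * y S ≤ matroidWorth M w := by
      rw [hobj, habel, ← hGsum]
      exact le_matroidWorth w hGind
    have hge : matroidWorth M w ≤ ∑ S : Finset α, (matroidRank M ↑S : ℝ) * y S := by
      rw [hI₀]
      exact weak_duality w y hy0 hyfeas hI₀ind
    linarith
  constructor
  · exact ⟨y, hy0, hyfeas, hobj_eq.symm⟩
  · rintro s ⟨y', hy'0, hy'feas, rfl⟩
    rw [hI₀]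
    exact weak_duality w y' hy'0 hy'feas hI₀ind
end

section
/- (Clique game over perfect graphs) Let G = (V,E) be a finite perfect graph with nonnegative real vertex weights w. A function y assigning a nonnegative real y_S to each nonempty stable set S of G is in the core of the clique game on (G,w) if and only if y is an optimal solution of the dual LP, i.e., Σ_{S : v ∈ S} y_S ≥ w(v) for every vertex v, and Σ_S y_S is minimum among all nonnegative functions on the nonempty stable sets satisfying these constraints. -/
open scoped Classical

def IsStableSet {V : Type*} (G : SimpleGraph V) (S : Set V) : Prop :=
  S.Pairwise fun u v => ¬ G.Adj u v

def IsPerfect {V : Type*} (G : SimpleGraph V) : Prop :=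
  ∀ T : Set V, (G.induce T).chromaticNumber = ((G.induce T).cliqueNum : ℕ∞)

/-- `worth(T)` for the clique game: the maximum total weight of a clique contained in `T`. -/
noncomputable def cliqueWorth {V : Type*} [Fintype V] (G : SimpleGraph V) (w : V → ℝ)
    (T : Set V) : ℝ :=
  sSup {x : ℝ | ∃ Q : Finset V, ↑Q ⊆ T ∧ G.IsClique (↑Q : Set V) ∧ x = ∑ v ∈ Q, w v}

/-- The nonempty stable sets of `G`, as a finset of finsets. -/
noncomputable def stableSetsOf {V : Type*} [Fintype V] (G : SimpleGraph V) :
    Finset (Finset V) :=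
  Finset.univ.filter fun S => S.Nonempty ∧ IsStableSet G (↑S : Set V)

/-!
Weak duality, i.e. that a stable set meets a clique at most once, shows that every dual-feasible `y`
satisfies the core inequalities and has total at least `worth(G)`; conversely the coalitions
`T = {v}` of the core give dual feasibility. What remains is that the dual optimum is `worth(G)`.
For integral weights `m` this is Lovász's replication lemma: blowing each vertex `v` up into a
clique of `m v` true twins keeps the graph perfect, so the blown-up graph can be coloured with as
many colours as its clique number, which is the maximum `m`-weight of a clique of `G`; the colour
classes project to that many stable sets covering each `v` at least `m v` times. Real weights are
approximated from above by `⌈N w⌉ / N`.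
-/

open Finset SimpleGraph

namespace SimpleGraph

variable {W : Type*} {H : SimpleGraph W}

theorem Embedding.cliqueNum_le {W' : Type*} [Finite W'] {H' : SimpleGraph W'} (f : H ↪g H') :
    H.cliqueNum ≤ H'.cliqueNum := by
  obtain ⟨s, hs⟩ := H.exists_isNClique_cliqueNum
  have hc : H'.IsClique (s.map f.toEmbedding : Set W') := by
    rw [coe_map]
    rintro _ ⟨a, ha, rfl⟩ _ ⟨b, hb, rfl⟩ hab
    exact f.map_adj_iff.mpr (hs.isClique ha hb (ne_of_apply_ne _ hab))
  simpa [hs.card_eq] using IsClique.card_le_cliqueNum (tc := hc)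

theorem chromaticNumber_eq_cliqueNum_iff :
    H.chromaticNumber = H.cliqueNum ↔ H.Colorable H.cliqueNum :=
  ⟨fun h => chromaticNumber_le_iff_colorable.mp h.le,
    fun h => le_antisymm h.chromaticNumber_le cliqueNum_le_chromaticNumber⟩

theorem card_le_cliqueNum_induce [Finite W] {T : Set W} {Q : Finset W} (hQT : ↑Q ⊆ T)
    (hQ : H.IsClique (Q : Set W)) : #Q ≤ (H.induce T).cliqueNum := by
  have hc : (H.induce T).IsNClique #Q (Q.subtype (· ∈ T)) := by
    rw [isNClique_induce_iff, subtype_map, filter_true_of_mem fun v hv => hQT hv]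
    exact ⟨hQ, rfl⟩
  exact hc.card_eq ▸ IsClique.card_le_cliqueNum (tc := hc.isClique)

theorem exists_isClique_card_eq_cliqueNum_induce (T : Set W) :
    ∃ Q : Finset W, ↑Q ⊆ T ∧ H.IsClique (Q : Set W) ∧ #Q = (H.induce T).cliqueNum := by
  obtain ⟨s, hs⟩ := (H.induce T).exists_isNClique_cliqueNum
  rw [isNClique_induce_iff] at hs
  exact ⟨_, by simp, hs.isClique, hs.card_eq⟩

theorem cliqueNum_induce_mono [Finite W] {S T : Set W} (h : S ⊆ T) :
    (H.induce S).cliqueNum ≤ (H.induce T).cliqueNum := by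
  obtain ⟨Q, hQS, hQ, hQcard⟩ := exists_isClique_card_eq_cliqueNum_induce (H := H) S
  exact hQcard ▸ card_le_cliqueNum_induce (hQS.trans h) hQ

theorem colorable_induce_iff {T : Set W} {n : ℕ} :
    (H.induce T).Colorable n ↔
      ∃ f : W → ℕ, (∀ v ∈ T, f v < n) ∧ ∀ u ∈ T, ∀ v ∈ T, H.Adj u v → f u ≠ f v := by
  constructor
  · rintro ⟨C⟩
    refine ⟨fun v => if h : v ∈ T then C ⟨v, h⟩ else 0, fun v hv => by simp [hv],
      fun u hu v hv huv => ?_⟩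
    simpa [hu, hv, Fin.val_inj] using C.valid (v := ⟨u, hu⟩) (w := ⟨v, hv⟩) huv
  · rintro ⟨f, hlt, hf⟩
    exact ⟨Coloring.mk (fun v => ⟨f v, hlt v v.2⟩) fun {u v} huv => by
      simpa [Fin.ext_iff] using hf u u.2 v v.2 huv⟩

theorem colorable_induce_succ_of_sdiff {T S : Set W} {p : ℕ} (hS : H.IsIndepSet S)
    (h : (H.induce (T \ S)).Colorable p) : (H.induce T).Colorable (p + 1) := by
  obtain ⟨f, hlt, hf⟩ := colorable_induce_iff.mp h
  refine colorable_induce_iff.mpr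
    ⟨fun v => if v ∈ S then p else f v, fun v hv => ?_, fun u hu v hv huv => ?_⟩
  · by_cases hvS : v ∈ S
    · simp [hvS]
    · simpa [hvS] using (hlt v ⟨hv, hvS⟩).trans (Nat.lt_succ_self p)
  · by_cases huS : u ∈ S <;> by_cases hvS : v ∈ S <;> simp only [huS, hvS, if_true, if_false]
    · exact absurd huv (hS huS hvS huv.ne)
    · exact (hlt v ⟨hv, hvS⟩).ne'
    · exact (hlt u ⟨hu, huS⟩).ne
    · exact hf u ⟨hu, huS⟩ v ⟨hv, hvS⟩ huv

theorem exists_mem_eq_of_isClique {T : Set W} {f : W → ℕ} {n : ℕ} (hlt : ∀ v ∈ T, f v < n)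
    (hf : ∀ u ∈ T, ∀ v ∈ T, H.Adj u v → f u ≠ f v) {Q : Finset W} (hQT : ↑Q ⊆ T)
    (hQ : H.IsClique (Q : Set W)) (hn : n ≤ #Q) {k : ℕ} (hk : k < n) : ∃ q ∈ Q, f q = k := by
  obtain ⟨q, hq, rfl⟩ := surj_on_of_inj_on_of_card_le (s := Q) (t := range n) (fun q _ => f q)
    (fun q hq => mem_range.mpr (hlt q (hQT hq)))
    (fun a b ha hb hab => by_contra fun hne => hf a (hQT ha) b (hQT hb) (hQ ha hb hne) hab)
    (by simpa using hn) k (mem_range.mpr hk)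
  exact ⟨q, hq, rfl⟩

theorem isClique_insert_of_twin {s : Set W} {x₀ x₁ : W} (hs : H.IsClique s) (hx₀ : x₀ ∈ s)
    (hadj : H.Adj x₀ x₁) (htwin : ∀ c, c ≠ x₀ → c ≠ x₁ → (H.Adj c x₀ ↔ H.Adj c x₁)) :
    H.IsClique (insert x₁ s) := by
  refine hs.insert fun c hc hne => ?_
  by_cases hcx₀ : c = x₀
  · exact hcx₀ ▸ hadj.symm
  · exact ((htwin c hcx₀ hne.symm).mp (hs hc hx₀ hcx₀)).symm

theorem colorable_cliqueNum_induce_of_twins [Finite W] {T : Set W} {x₀ x₁ : W}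
    (hx₀ : x₀ ∈ T) (hx₁ : x₁ ∈ T) (hadj : H.Adj x₀ x₁)
    (htwin : ∀ c, c ≠ x₀ → c ≠ x₁ → (H.Adj c x₀ ↔ H.Adj c x₁))
    (ih : ∀ S ⊂ T, (H.induce S).Colorable (H.induce S).cliqueNum) :
    (H.induce T).Colorable (H.induce T).cliqueNum := by
  set T' := T \ {x₁}
  set n := (H.induce T').cliqueNum
  have hT' : T' ⊂ T := Set.sdiff_singleton_ssubset.mpr hx₁
  have hnT : n ≤ (H.induce T).cliqueNum := cliqueNum_induce_mono hT'.subset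
  rcases hnT.lt_or_eq with hgrow | hsame
  · exact (colorable_induce_succ_of_sdiff (Set.pairwise_singleton _ _) (ih T' hT')).mono hgrow
  obtain ⟨f, hlt, hf⟩ := colorable_induce_iff.mp (ih T' hT')
  -- `B` meets every maximum clique of `T'`, because a maximum clique through `x₀` would extend
  -- by `x₁`; so `T` is coloured by `B ∪ {x₁}` together with `n - 1` colours for the rest.
  set B := {c ∈ T' | f c = f x₀ ∧ c ≠ x₀}
  have hx₀T' : x₀ ∈ T' := ⟨hx₀, hadj.ne⟩
  have hB : H.IsIndepSet (insert x₁ B) := by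
    have hx₁B : ∀ c ∈ B, ¬ H.Adj c x₁ := fun c ⟨hcT', hc, hcx₀⟩ hcx₁ =>
      hf c hcT' x₀ hx₀T' ((htwin c hcx₀ hcx₁.ne).mpr hcx₁) hc
    refine Set.pairwise_insert.mpr ⟨fun c hc d hd _ hcd => ?_, fun c hc _ =>
      ⟨fun h => hx₁B c hc h.symm, hx₁B c hc⟩⟩
    exact hf c hc.1 d hd.1 hcd (hc.2.1.trans hd.2.1.symm)
  have hT'' : T \ insert x₁ B ⊂ T :=
    Set.sdiff_ssubset_left_iff.mpr ⟨x₁, hx₁, Set.mem_insert _ _⟩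
  have hsmall : (H.induce (T \ insert x₁ B)).cliqueNum < n := by
    obtain ⟨Q, hQT, hQ, hQcard⟩ :=
      exists_isClique_card_eq_cliqueNum_induce (H := H) (T \ insert x₁ B)
    rw [← hQcard]
    by_contra! hnQ
    have hQT' : ↑Q ⊆ T' := hQT.trans (Set.sdiff_subset_sdiff_right (by simp))
    obtain ⟨q, hq, hfq⟩ := exists_mem_eq_of_isClique hlt hf hQT' hQ hnQ (hlt x₀ hx₀T')
    obtain rfl : q = x₀ := by_contra fun hne => (hQT hq).2 (Or.inr ⟨hQT' hq, hfq, hne⟩)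
    have hx₁Q : x₁ ∉ Q := fun h => (hQT' h).2 rfl
    have hclique : H.IsClique (insert x₁ Q : Finset W) := by
      simpa using isClique_insert_of_twin hQ hq hadj htwin
    have := card_le_cliqueNum_induce
      (by simpa using Set.insert_subset hx₁ (hQT'.trans hT'.subset)) hclique
    rw [card_insert_of_notMem hx₁Q] at this
    omega
  exact (colorable_induce_succ_of_sdiff hB (ih _ hT'')).mono (by omega)

variable {V : Type*} {G : SimpleGraph V}

def replicate (G : SimpleGraph V) (m : V → ℕ) : SimpleGraph (Σ v, Fin (m v)) where
  Adj a b := a ≠ b ∧ (a.1 = b.1 ∨ G.Adj a.1 b.1)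
  symm := ⟨fun _ _ h => ⟨h.1.symm, h.2.imp Eq.symm G.adj_symm⟩⟩
  loopless := ⟨fun _ h => h.1 rfl⟩

theorem replicate_adj {m : V → ℕ} {a b : Σ v, Fin (m v)} :
    (G.replicate m).Adj a b ↔ a ≠ b ∧ (a.1 = b.1 ∨ G.Adj a.1 b.1) := Iff.rfl

noncomputable def replicateInduceIsoOfInjOn {m : V → ℕ} {T : Set (Σ v, Fin (m v))}
    (hT : Set.InjOn Sigma.fst T) : (G.replicate m).induce T ≃g G.induce (Sigma.fst '' T) where
  toEquiv := Equiv.Set.imageOfInjOn Sigma.fst T hT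
  map_rel_iff' {a b} := by
    change G.Adj a.1.1 b.1.1 ↔ _ ∧ _
    refine ⟨fun h => ⟨fun hab => h.ne (congrArg _ hab), Or.inr h⟩, ?_⟩
    rintro ⟨hne, heq | hadj⟩
    · exact absurd (hT a.2 b.2 heq) hne
    · exact hadj

theorem IsClique.image_fst_replicate {m : V → ℕ} {Q : Finset (Σ v, Fin (m v))}
    (hQ : (G.replicate m).IsClique (Q : Set (Σ v, Fin (m v)))) :
    G.IsClique (Q.image Sigma.fst : Set V) := by
  rw [coe_image]
  rintro _ ⟨a, ha, rfl⟩ _ ⟨b, hb, rfl⟩ hab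
  exact (replicate_adj.mp (hQ ha hb (ne_of_apply_ne _ hab))).2.resolve_left hab

theorem card_le_sum_image_fst {m : V → ℕ} (Q : Finset (Σ v, Fin (m v))) :
    #Q ≤ ∑ v ∈ Q.image Sigma.fst, m v := by
  calc #Q ≤ #((Q.image Sigma.fst).sigma fun _ => univ) :=
        card_le_card fun a ha => mem_sigma.mpr ⟨mem_image_of_mem _ ha, mem_univ _⟩
    _ = ∑ v ∈ Q.image Sigma.fst, m v := by simp [card_sigma]

end SimpleGraph

theorem isPerfect_iff_forall_colorable {V : Type*} {G : SimpleGraph V} :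
    IsPerfect G ↔ ∀ T : Set V, (G.induce T).Colorable (G.induce T).cliqueNum :=
  forall_congr' fun _ => SimpleGraph.chromaticNumber_eq_cliqueNum_iff

theorem IsPerfect.replicate {V : Type*} [Finite V] {G : SimpleGraph V} (hG : IsPerfect G)
    (m : V → ℕ) : IsPerfect (G.replicate m) := by
  rw [isPerfect_iff_forall_colorable] at hG ⊢
  intro T
  induction T using WellFoundedLT.induction with
  | _ T ih =>
  by_cases hinj : Set.InjOn Sigma.fst T
  · let e := replicateInduceIsoOfInjOn (G := G) hinj
    exact ((hG _).mono e.symm.toEmbedding.cliqueNum_le).of_hom e.toHom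
  obtain ⟨a, ha, b, hb, hab, hne⟩ : ∃ a ∈ T, ∃ b ∈ T, a.1 = b.1 ∧ a ≠ b := by
    simpa [Set.InjOn] using hinj
  refine colorable_cliqueNum_induce_of_twins ha hb (replicate_adj.mpr ⟨hne, Or.inl hab⟩)
    (fun c hca hcb => ?_) ih
  simp [replicate_adj, hca, hcb, hab]

theorem IsStableSet.card_inter_le_one {V : Type*} {G : SimpleGraph V} {S Q : Finset V}
    (hS : IsStableSet G (S : Set V)) (hQ : G.IsClique (Q : Set V)) : #(S ∩ Q) ≤ 1 :=
  card_le_one.mpr fun _ ha _ hb => by_contra fun hab =>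
    hS (mem_inter.mp ha).1 (mem_inter.mp hb).1 hab (hQ (mem_inter.mp ha).2 (mem_inter.mp hb).2 hab)

section CliqueGame

variable {V : Type*} [Fintype V] {G : SimpleGraph V} {w : V → ℝ} {T : Set V}

theorem finite_cliqueWeights (G : SimpleGraph V) (w : V → ℝ) (T : Set V) :
    {x : ℝ | ∃ Q : Finset V, ↑Q ⊆ T ∧ G.IsClique (Q : Set V) ∧ x = ∑ v ∈ Q, w v}.Finite :=
  (Set.finite_range fun Q : Finset V => ∑ v ∈ Q, w v).subset <| by
    rintro _ ⟨Q, -, -, rfl⟩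
    exact ⟨Q, rfl⟩

theorem exists_isClique_cliqueWorth_eq (G : SimpleGraph V) (w : V → ℝ) (T : Set V) :
    ∃ Q : Finset V, ↑Q ⊆ T ∧ G.IsClique (Q : Set V) ∧ cliqueWorth G w T = ∑ v ∈ Q, w v := by
  refine Set.Nonempty.csSup_mem ?_ (finite_cliqueWeights G w T)
  exact ⟨0, ∅, by simp, by simp⟩

theorem sum_le_cliqueWorth {Q : Finset V} (hQT : ↑Q ⊆ T) (hQ : G.IsClique (Q : Set V)) :
    ∑ v ∈ Q, w v ≤ cliqueWorth G w T :=
  le_csSup (finite_cliqueWeights G w T).bddAbove ⟨Q, hQT, hQ, rfl⟩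

theorem cliqueWorth_singleton (hw : ∀ v, 0 ≤ w v) (v : V) : cliqueWorth G w {v} = w v := by
  obtain ⟨Q, hQv, -, hQ⟩ := exists_isClique_cliqueWorth_eq G w {v}
  refine le_antisymm ?_ ?_
  · rw [hQ, ← sum_singleton w v]
    exact sum_le_sum_of_subset_of_nonneg (fun u hu => by simpa using hQv hu) fun u _ _ => hw u
  · simpa using sum_le_cliqueWorth (G := G) (w := w) (Q := {v}) (by simp) (by simp)

theorem mem_stableSetsOf {S : Finset V} :
    S ∈ stableSetsOf G ↔ S.Nonempty ∧ IsStableSet G (S : Set V) := by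
  simp [stableSetsOf]

structure IsDualFeasible (G : SimpleGraph V) (w : V → ℝ) (y : Finset V → ℝ) : Prop where
  nonneg : ∀ S ∈ stableSetsOf G, 0 ≤ y S
  le_sum : ∀ v, w v ≤ ∑ S ∈ (stableSetsOf G).filter (fun S => v ∈ S), y S

namespace IsDualFeasible

variable {y : Finset V → ℝ}

theorem sum_le_of_isClique (hy : IsDualFeasible G w y) {Q : Finset V} (hQT : ↑Q ⊆ T)
    (hQ : G.IsClique (Q : Set V)) :
    ∑ v ∈ Q, w v ≤
      ∑ S ∈ (stableSetsOf G).filter (fun S : Finset V => ((S : Set V) ∩ T).Nonempty), y S := by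
  calc ∑ v ∈ Q, w v
      ≤ ∑ v ∈ Q, ∑ S ∈ (stableSetsOf G).filter (fun S => v ∈ S), y S :=
        sum_le_sum fun v _ => hy.le_sum v
    _ = ∑ S ∈ stableSetsOf G, #(S ∩ Q) * y S := by
      simp_rw [sum_filter]
      rw [sum_comm]
      refine sum_congr rfl fun S _ => ?_
      rw [← sum_filter, sum_const, nsmul_eq_mul, filter_mem_eq_inter, inter_comm]
    _ ≤ ∑ S ∈ stableSetsOf G, if ((S : Set V) ∩ T).Nonempty then y S else 0 := by
      refine sum_le_sum fun S hS => ?_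
      split_ifs with hST
      · have := (mem_stableSetsOf.mp hS).2.card_inter_le_one hQ
        exact mul_le_of_le_one_left (hy.nonneg S hS) (by exact_mod_cast this)
      · have : S ∩ Q = ∅ := eq_empty_of_forall_notMem fun v hv =>
          hST ⟨v, (mem_inter.mp hv).1, hQT (mem_inter.mp hv).2⟩
        simp [this]
    _ = _ := (sum_filter _ _).symm

theorem cliqueWorth_le (hy : IsDualFeasible G w y) (T : Set V) :
    cliqueWorth G w T ≤
      ∑ S ∈ (stableSetsOf G).filter (fun S : Finset V => ((S : Set V) ∩ T).Nonempty), y S := by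
  obtain ⟨Q, hQT, hQ, hworth⟩ := exists_isClique_cliqueWorth_eq G w T
  exact hworth ▸ hy.sum_le_of_isClique hQT hQ

theorem cliqueWorth_univ_le (hy : IsDualFeasible G w y) :
    cliqueWorth G w Set.univ ≤ ∑ S ∈ stableSetsOf G, y S :=
  (hy.cliqueWorth_le Set.univ).trans <|
    sum_le_sum_of_subset_of_nonneg (filter_subset _ _) fun S hS _ => hy.nonneg S hS

end IsDualFeasible

theorem sum_card_fiberwise_stableSetsOf_mem {k : ℕ} {f : Fin k → Finset V}
    (hf : ∀ b, IsStableSet G (f b : Set V)) (v : V) :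
    ∑ S ∈ (stableSetsOf G).filter (fun S => v ∈ S), #{b | f b = S} = #{b | v ∈ f b} := by
  rw [sum_card_fiberwise_eq_card_filter]
  congr 1
  ext b
  simpa [mem_stableSetsOf, hf b] using fun hv => ⟨v, hv⟩

theorem isDualFeasible_of_stableSet_cover {k : ℕ} {f : Fin k → Finset V}
    (hf : ∀ b, IsStableSet G (f b : Set V)) {N : ℝ} (hN : 0 < N)
    (hcover : ∀ v, N * w v ≤ #{b | v ∈ f b}) :
    IsDualFeasible G w fun S => #{b | f b = S} / N where
  nonneg _ _ := by positivity
  le_sum v := by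
    rw [← sum_div, ← Nat.cast_sum, sum_card_fiberwise_stableSetsOf_mem hf, le_div_iff₀' hN]
    exact hcover v

theorem sum_card_fiberwise_stableSetsOf_le {k : ℕ} (f : Fin k → Finset V) :
    ∑ S ∈ stableSetsOf G, #{b | f b = S} ≤ k := by
  rw [sum_card_fiberwise_eq_card_filter]
  exact (card_filter_le _ _).trans_eq (card_fin k)

theorem cliqueWorth_le_mul_add_card {w' : V → ℝ} {c : ℝ} (hc : 0 ≤ c)
    (h : ∀ v, w' v ≤ c * w v + 1) :
    cliqueWorth G w' T ≤ c * cliqueWorth G w T + Fintype.card V := by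
  obtain ⟨Q, hQT, hQ, hworth⟩ := exists_isClique_cliqueWorth_eq G w' T
  calc cliqueWorth G w' T = ∑ v ∈ Q, w' v := hworth
    _ ≤ ∑ v ∈ Q, (c * w v + 1) := sum_le_sum fun v _ => h v
    _ = c * ∑ v ∈ Q, w v + #Q := by simp [sum_add_distrib, mul_sum]
    _ ≤ c * cliqueWorth G w T + Fintype.card V := by
      gcongr
      · exact sum_le_cliqueWorth hQT hQ
      · exact_mod_cast card_le_univ Q

end CliqueGame

theorem IsPerfect.exists_stableSet_cover {V : Type*} [Fintype V] {G : SimpleGraph V}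
    (hG : IsPerfect G) (m : V → ℕ) :
    ∃ (k : ℕ) (f : Fin k → Finset V), (∀ b, IsStableSet G (f b : Set V)) ∧
      (∀ v, m v ≤ #{b | v ∈ f b}) ∧ (k : ℝ) ≤ cliqueWorth G (fun v => m v) Set.univ := by
  set H := G.replicate m
  have hcol : H.Colorable H.cliqueNum :=
    ((isPerfect_iff_forall_colorable.mp (hG.replicate m) Set.univ).mono
      H.induceUnivIso.toEmbedding.cliqueNum_le).of_hom H.induceUnivIso.symm.toHom
  obtain ⟨C⟩ := hcol
  refine ⟨H.cliqueNum, fun b => {v | ∃ i, C ⟨v, i⟩ = b}, ?_, fun v => ?_, ?_⟩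
  · rintro b u hu v hv huv hadj
    obtain ⟨i, rfl⟩ := (mem_filter.mp hu).2
    obtain ⟨j, hj⟩ := (mem_filter.mp hv).2
    exact C.valid (replicate_adj.mpr ⟨by simp [huv], Or.inr hadj⟩) hj.symm
  · calc m v = #(univ : Finset (Fin (m v))) := (card_fin _).symm
      _ ≤ _ := card_le_card_of_injOn (fun i => C ⟨v, i⟩) (fun i _ => by simp)
          fun i _ j _ hij => by_contra fun hne => C.valid (v := ⟨v, i⟩) (w := ⟨v, j⟩)
            (replicate_adj.mpr ⟨fun h => hne (eq_of_heq (Sigma.mk.inj h).2), Or.inl rfl⟩) hij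
  · obtain ⟨Q, hQ⟩ := H.exists_isNClique_cliqueNum
    calc (H.cliqueNum : ℝ) = #Q := by rw [hQ.card_eq]
      _ ≤ ∑ v ∈ Q.image Sigma.fst, (m v : ℝ) := by exact_mod_cast card_le_sum_image_fst Q
      _ ≤ _ := sum_le_cliqueWorth (by simp) hQ.isClique.image_fst_replicate

theorem IsPerfect.exists_isDualFeasible_sum_le_add {V : Type*} [Fintype V] {G : SimpleGraph V}
    (hG : IsPerfect G) {w : V → ℝ} (hw : ∀ v, 0 ≤ w v) {ε : ℝ} (hε : 0 < ε) :
    ∃ y, IsDualFeasible G w y ∧ ∑ S ∈ stableSetsOf G, y S ≤ cliqueWorth G w Set.univ + ε := by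
  obtain ⟨N, hN⟩ := exists_nat_gt (Fintype.card V / ε)
  have hN0 : (0 : ℝ) < N := (div_nonneg (Nat.cast_nonneg _) hε.le).trans_lt hN
  -- Round `N • w` up to integers and divide an integral cover of the rounded weights by `N`.
  obtain ⟨k, f, hf, hcover, hk⟩ := hG.exists_stableSet_cover fun v => ⌈N * w v⌉₊
  refine ⟨_, isDualFeasible_of_stableSet_cover hf hN0 fun v =>
    (Nat.le_ceil _).trans (by exact_mod_cast hcover v), ?_⟩
  have hworth : cliqueWorth G (fun v => (⌈N * w v⌉₊ : ℝ)) Set.univ ≤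
      N * cliqueWorth G w Set.univ + Fintype.card V :=
    cliqueWorth_le_mul_add_card hN0.le fun v => (Nat.ceil_lt_add_one (mul_nonneg hN0.le (hw v))).le
  calc ∑ S ∈ stableSetsOf G, (#{b | f b = S} : ℝ) / N ≤ k / N := by
        rw [← sum_div]
        gcongr
        exact_mod_cast sum_card_fiberwise_stableSetsOf_le f
    _ ≤ (N * cliqueWorth G w Set.univ + Fintype.card V) / N := by gcongr; exact hk.trans hworth
    _ = cliqueWorth G w Set.univ + Fintype.card V / N := by field_simp
    _ ≤ cliqueWorth G w Set.univ + ε := by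
        gcongr
        exact (div_le_iff₀ hN0).mpr (by linarith [(div_lt_iff₀ hε).mp hN])

theorem clique_game_core_iff_dual_optimal
    {V : Type*} [Fintype V] (G : SimpleGraph V) (hG : IsPerfect G)
    (w : V → ℝ) (hw : ∀ v, 0 ≤ w v)
    (y : Finset V → ℝ) (hy : ∀ S ∈ stableSetsOf G, 0 ≤ y S) :
    -- `y` is in the core of the clique game
    ((∑ S ∈ stableSetsOf G, y S = cliqueWorth G w Set.univ) ∧
      ∀ T : Set V,
        cliqueWorth G w T ≤
          ∑ S ∈ (stableSetsOf G).filter (fun S : Finset V => ((S : Set V) ∩ T).Nonempty), y S)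
    ↔
    -- `y` is an optimal solution of the dual LP
    ((∀ v : V, w v ≤ ∑ S ∈ (stableSetsOf G).filter (fun S => v ∈ S), y S) ∧
      ∀ y' : Finset V → ℝ, (∀ S ∈ stableSetsOf G, 0 ≤ y' S) →
        (∀ v : V, w v ≤ ∑ S ∈ (stableSetsOf G).filter (fun S => v ∈ S), y' S) →
        ∑ S ∈ stableSetsOf G, y S ≤ ∑ S ∈ stableSetsOf G, y' S) := by
  constructor
  · rintro ⟨hsum, hcore⟩
    refine ⟨fun v => ?_, fun y' hy' hfeas' =>
      hsum ▸ IsDualFeasible.cliqueWorth_univ_le ⟨hy', hfeas'⟩⟩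
    simpa [cliqueWorth_singleton hw] using hcore {v}
  · rintro ⟨hfeas, hopt⟩
    have hy : IsDualFeasible G w y := ⟨hy, hfeas⟩
    refine ⟨le_antisymm (le_of_forall_pos_le_add fun ε hε => ?_) hy.cliqueWorth_univ_le,
      hy.cliqueWorth_le⟩
    obtain ⟨y', hy', hsum'⟩ := hG.exists_isDualFeasible_sum_le_add hw hε
    exact (hopt y' hy'.nonneg hy'.le_sum).trans hsum'
end
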